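/- arXiv:math/0310210 — 2 statements merged into one kernel-verified Lean document; each statement's English description precedes it below -/
import Mathlib

section
/- Let G = (V,E) be a finite simple graph, V₀ ⊆ V a nonempty set meeting every connected component of G, and v₁ ∈ V ∖ V₀. Let h : V₀ → ℝ, let h̄ be its unique harmonic extension relative to V₀, and for b ∈ ℝ let H_b : V → ℝ be the unique function that equals h on V₀, equals b at v₁, and is discrete harmonic at every vertex of V ∖ (V₀ ∪ {v₁}). Then for every v ∈ V, h̄(v) = h̄(v₁)·H₁(v) + (1 − h̄(v₁))·H₀(v). (This is the one-step martingale property of the harmonic explorer: if the vertex v₁ is assigned boundary value 1 with probability h̄(v₁) and 0 otherwise, the expected value of the new harmonic extension at every vertex equals the old one.) -/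
open Finset

/-- The discrete Laplacian of `f : V → ℝ` on a finite simple graph. -/
def glap {V : Type*} [Fintype V] [DecidableEq V] (G : SimpleGraph V) [DecidableRel G.Adj]
    (f : V → ℝ) (v : V) : ℝ :=
  ∑ u ∈ G.neighborFinset v, (f u - f v)

/-- The Dirichlet energy of `f : V → ℝ` on a finite simple graph:
`∑_{{u,v} ∈ E} (f u - f v)^2`. -/
noncomputable def genergy {V : Type*} [Fintype V] [DecidableEq V] (G : SimpleGraph V)
    [DecidableRel G.Adj] (f : V → ℝ) : ℝ :=
  ∑ e ∈ G.edgeFinset, Sym2.lift ⟨fun u v => (f u - f v) ^ 2, fun u v => by ring⟩ e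

/-- Maximum principle: a function vanishing on `B`, harmonic off `B`, with every vertex
reaching `B`, is `≤ 0` everywhere. -/
lemma harmonic_nonpos {V : Type*} [Fintype V] [DecidableEq V]
    (G : SimpleGraph V) [DecidableRel G.Adj] (B : Finset V) (hB : B.Nonempty)
    (hmeet : ∀ v : V, ∃ u ∈ B, G.Reachable v u)
    (f : V → ℝ) (h0 : ∀ v ∈ B, f v = 0)
    (hh : ∀ v, v ∉ B → glap G f v = 0) : ∀ v, f v ≤ 0 := by
  have hne : (Finset.univ : Finset V).Nonempty := ⟨hB.choose, Finset.mem_univ _⟩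
  set M := Finset.univ.sup' hne f with hM
  have hle : ∀ x, f x ≤ M := fun x => Finset.le_sup' f (Finset.mem_univ x)
  have key : ∀ (v u : V) (p : G.Walk v u), u ∈ B → f v = M → M = 0 := by
    intro v u p
    induction p with
    | nil => intro hu hv; rw [← hv]; exact h0 _ hu
    | @cons a b c hadj q ih =>
      intro hu hv
      by_cases hvB : a ∈ B
      · rw [← hv]; exact h0 _ hvB
      · have hl := hh _ hvB
        have hnp : ∀ x ∈ G.neighborFinset a, f x - f a ≤ 0 := fun x _ => by
          rw [hv]; linarith [hle x]
        have hz := (Finset.sum_eq_zero_iff_of_nonpos hnp).mp hl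
        apply ih hu
        have := hz b (by rwa [SimpleGraph.mem_neighborFinset])
        linarith
  intro v
  obtain ⟨w, _, hw⟩ := Finset.exists_mem_eq_sup' hne f
  obtain ⟨u, hu, hr⟩ := hmeet w
  obtain ⟨p⟩ := hr
  have hM0 := key w u p hu hw.symm
  calc f v ≤ M := hle v
    _ = 0 := hM0

/-- one-step martingale property of the harmonic explorer: let `h̄` be the
harmonic extension of `h : V₀ → ℝ`, and for `b ∈ {0,1}` let `H_b` be the unique function equal
to `h` on `V₀`, equal to `b` at `v₁ ∉ V₀`, and discrete harmonic on `V ∖ (V₀ ∪ {v₁})`.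
Then `h̄(v) = h̄(v₁)·H₁(v) + (1 − h̄(v₁))·H₀(v)` for every `v`. -/
theorem harmonic_explorer_one_step_martingale {V : Type*} [Fintype V] [DecidableEq V]
    (G : SimpleGraph V) [DecidableRel G.Adj] (V₀ : Finset V) (hV₀ : V₀.Nonempty)
    (hmeet : ∀ v : V, ∃ u ∈ V₀, G.Reachable v u)
    (v₁ : V) (hv₁ : v₁ ∉ V₀)
    (h hbar H₀ H₁ : V → ℝ)
    (he : ∀ v ∈ V₀, hbar v = h v) (hharm : ∀ v : V, v ∉ V₀ → glap G hbar v = 0)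
    (he₀ : ∀ v ∈ V₀, H₀ v = h v) (hv₁0 : H₀ v₁ = 0)
    (hharm₀ : ∀ v : V, v ∉ V₀ → v ≠ v₁ → glap G H₀ v = 0)
    (he₁ : ∀ v ∈ V₀, H₁ v = h v) (hv₁1 : H₁ v₁ = 1)
    (hharm₁ : ∀ v : V, v ∉ V₀ → v ≠ v₁ → glap G H₁ v = 0) :
    ∀ v : V, hbar v = hbar v₁ * H₁ v + (1 - hbar v₁) * H₀ v := by
  set a := hbar v₁ with ha
  set f : V → ℝ := fun v => hbar v - (a * H₁ v + (1 - a) * H₀ v) with hf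
  set B : Finset V := insert v₁ V₀ with hBdef
  have hBne : B.Nonempty := ⟨v₁, Finset.mem_insert_self _ _⟩
  have hmeetB : ∀ v : V, ∃ u ∈ B, G.Reachable v u := by
    intro v
    obtain ⟨u, hu, hr⟩ := hmeet v
    exact ⟨u, Finset.mem_insert_of_mem hu, hr⟩
  have h0 : ∀ v ∈ B, f v = 0 := by
    intro v hv
    rcases Finset.mem_insert.mp hv with rfl | hv
    · simp [hf, hv₁1, hv₁0, ha]
    · simp only [hf]
      rw [he v hv, he₀ v hv, he₁ v hv]; ring
  have lin : ∀ v, glap G f v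
      = glap G hbar v - a * glap G H₁ v - (1 - a) * glap G H₀ v := by
    intro v
    simp only [glap, Finset.mul_sum, ← Finset.sum_sub_distrib, hf]
    apply Finset.sum_congr rfl
    intro x _; ring
  have hhf : ∀ v, v ∉ B → glap G f v = 0 := by
    intro v hv
    have hv0 : v ∉ V₀ := fun hh' => hv (Finset.mem_insert_of_mem hh')
    have hvne : v ≠ v₁ := fun hh' => hv (hh' ▸ Finset.mem_insert_self _ _)
    rw [lin, hharm v hv0, hharm₀ v hv0 hvne, hharm₁ v hv0 hvne]; ring
  have hneg : ∀ v, f v ≤ 0 := harmonic_nonpos G B hBne hmeetB f h0 hhf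
  have hpos : ∀ v, (-f) v ≤ 0 := by
    refine harmonic_nonpos G B hBne hmeetB (-f) (fun v hv => by simp [h0 v hv]) ?_
    intro v hv
    have : glap G (-f) v = - glap G f v := by
      simp only [glap, Pi.neg_apply, ← Finset.sum_neg_distrib]
      exact Finset.sum_congr rfl fun x _ => by ring
    rw [this, hhf v hv, neg_zero]
  intro v
  have h1 := hneg v
  have h2 := hpos v
  simp only [Pi.neg_apply, hf] at h1 h2
  linarith
end

section
/- Let T > 0, let W : [0,T] → ℝ be continuous, and let g : [0,T] → ℂ be differentiable with g′(t) = 2/(g(t) − W(t)) for every t ∈ [0,T], and set ε := inf{ |g(t) − W(t)| : t ∈ [0,T] }, assumed to be positive. Then there exists δ > 0 such that for every continuous W̃ : [0,T] → ℝ with sup{ |W̃(t) − W(t)| : t ∈ [0,T] } ≤ δ, there exists a differentiable g̃ : [0,T] → ℂ with g̃(0) = g(0), g̃′(t) = 2/(g̃(t) − W̃(t)) for every t ∈ [0,T], and satisfying |g̃(t) − W̃(t)| ≥ ε/2 and |g̃(t) − g(t)| ≤ ε/2 for every t ∈ [0,T]. (Solutions of Loewner's equation depend continuously on the driving function: a point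 whose trajectory stays at distance ε from the driver survives under any sufficiently small uniform perturbation of the driver.) -/
/-!
Off the disc of radius `r`, the Loewner field `2 / w = 2 w̄ / |w|²` coincides with
`2 w̄ / max(|w|, r)²`, which is bounded by `2 / r` and globally Lipschitz. With `r = ε / 2` the
truncated equation driven by `W̃` has a solution on all of `[0, T]` (Picard–Lindelöf), and `g`
solves the truncated equation driven by `W`. Grönwall's inequality, with the Lipschitz constant
`K = 6 / r²`, bounds `|g̃ - g|` by `δ e^{KT}`, which is `ε / 4` for the chosen `δ`. Then
`|g̃ - W̃| ≥ ε - ε/4 - δ ≥ ε / 2`, so `g̃` never enters the disc where the truncation acts and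
solves the true equation.
-/

open Complex Set ComplexConjugate

noncomputable def truncLoewnerField (r : ℝ) (w : ℂ) : ℂ :=
  (max ‖w‖ r ^ 2)⁻¹ • (2 * conj w)

theorem truncLoewnerField_eq_two_div {r : ℝ} {w : ℂ} (hw : r ≤ ‖w‖) :
    truncLoewnerField r w = 2 / w := by
  rcases eq_or_ne w 0 with rfl | hw0
  · simp [truncLoewnerField]
  rw [truncLoewnerField, max_eq_left hw, div_eq_mul_inv, inv_def, normSq_eq_norm_sq,
    real_smul]
  ring

theorem norm_truncLoewnerField_le {r : ℝ} (hr : 0 < r) (w : ℂ) :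
    ‖truncLoewnerField r w‖ ≤ 2 / r := by
  have hA : r ≤ max ‖w‖ r := le_max_right _ _
  have hwA : ‖w‖ ≤ max ‖w‖ r := le_max_left _ _
  have hA0 : 0 < max ‖w‖ r := hr.trans_le hA
  rw [truncLoewnerField, norm_smul, norm_inv, norm_pow, Real.norm_of_nonneg hA0.le, norm_mul,
    Complex.norm_two, norm_conj]
  calc (max ‖w‖ r ^ 2)⁻¹ * (2 * ‖w‖) ≤ (max ‖w‖ r ^ 2)⁻¹ * (2 * max ‖w‖ r) := by gcongr
    _ = 2 / max ‖w‖ r := by field_simp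
    _ ≤ 2 / r := by gcongr

theorem abs_inv_sq_sub_inv_sq_mul_le {r A B : ℝ} (hr : 0 < r) (hA : r ≤ A) (hB : r ≤ B) :
    |(A ^ 2)⁻¹ - (B ^ 2)⁻¹| * B ≤ 2 / r ^ 2 * |A - B| := by
  have hA0 : 0 < A := hr.trans_le hA
  have hB0 : 0 < B := hr.trans_le hB
  have key : |(A ^ 2)⁻¹ - (B ^ 2)⁻¹| * B = (1 / (A * B) + 1 / A ^ 2) * |A - B| := by
    rw [show (A ^ 2)⁻¹ - (B ^ 2)⁻¹ = (B + A) / (A ^ 2 * B ^ 2) * (B - A) by field_simp; ring,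
      abs_mul, abs_of_pos (by positivity), abs_sub_comm]
    field_simp
    ring
  rw [key]
  gcongr
  calc 1 / (A * B) + 1 / A ^ 2 ≤ 1 / (r * r) + 1 / r ^ 2 := by gcongr
    _ = 2 / r ^ 2 := by ring

theorem lipschitzWith_truncLoewnerField {r : ℝ} (hr : 0 < r) :
    LipschitzWith (6 / r ^ 2).toNNReal (truncLoewnerField r) := by
  refine LipschitzWith.of_dist_le_mul fun w v => ?_
  set A := max ‖w‖ r
  set B := max ‖v‖ r
  have hA : r ≤ A := le_max_right _ _
  have hB : r ≤ B := le_max_right _ _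
  have hvB : ‖v‖ ≤ B := le_max_left _ _
  have hAB : |A - B| ≤ dist w v :=
    (abs_max_sub_max_le_abs _ _ _).trans
      ((abs_norm_sub_norm_le w v).trans_eq (dist_eq_norm _ _).symm)
  have hsplit : truncLoewnerField r w - truncLoewnerField r v =
      (A ^ 2)⁻¹ • (2 * conj (w - v)) + ((A ^ 2)⁻¹ - (B ^ 2)⁻¹) • (2 * conj v) := by
    simp only [truncLoewnerField, map_sub, real_smul]
    push_cast
    ring
  rw [Real.coe_toNNReal _ (by positivity), dist_eq_norm, hsplit]
  calc _ ≤ 2 * ((A ^ 2)⁻¹ * dist w v) + 2 * (|(A ^ 2)⁻¹ - (B ^ 2)⁻¹| * ‖v‖) := by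
        refine (norm_add_le _ _).trans_eq ?_
        simp only [norm_smul, norm_mul, Complex.norm_two, norm_conj, Real.norm_eq_abs,
          dist_eq_norm, abs_inv, abs_pow, sq_abs]
        ring
    _ ≤ 2 * ((r ^ 2)⁻¹ * dist w v) + 2 * (2 / r ^ 2 * dist w v) := by
        have hfirst : (A ^ 2)⁻¹ * dist w v ≤ (r ^ 2)⁻¹ * dist w v := by gcongr
        have hsecond : |(A ^ 2)⁻¹ - (B ^ 2)⁻¹| * ‖v‖ ≤ 2 / r ^ 2 * dist w v :=
          calc _ ≤ |(A ^ 2)⁻¹ - (B ^ 2)⁻¹| * B := by gcongr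
            _ ≤ 2 / r ^ 2 * |A - B| := abs_inv_sq_sub_inv_sq_mul_le hr hA hB
            _ ≤ 2 / r ^ 2 * dist w v := by gcongr
        linarith
    _ = 6 / r ^ 2 * dist w v := by ring

theorem lipschitzWith_truncLoewnerField_sub {r : ℝ} (hr : 0 < r) (c : ℂ) :
    LipschitzWith (6 / r ^ 2).toNNReal (fun z => truncLoewnerField r (z - c)) :=
  LipschitzWith.of_dist_le_mul fun z w => by
    simpa only [dist_sub_right] using
      (lipschitzWith_truncLoewnerField hr).dist_le_mul (z - c) (w - c)

theorem exists_truncLoewner_solution {r T : ℝ} (hr : 0 < r) (hT : 0 ≤ T) {W : ℝ → ℝ}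
    (hW : ContinuousOn W (Icc 0 T)) (z₀ : ℂ) :
    ∃ g : ℝ → ℂ, g 0 = z₀ ∧ ∀ t ∈ Icc 0 T,
      HasDerivWithinAt g (truncLoewnerField r (g t - W t)) (Icc 0 T) t := by
  set L := (2 / r).toNNReal
  have hPL : IsPicardLindelof (fun t z => truncLoewnerField r (z - W t)) (tmin := 0) (tmax := T)
      ⟨0, left_mem_Icc.2 hT⟩ z₀ (L * T.toNNReal) 0 L (6 / r ^ 2).toNNReal :=
    ⟨fun t _ => (lipschitzWith_truncLoewnerField_sub hr _).lipschitzOnWith,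
      fun z _ => (lipschitzWith_truncLoewnerField hr).continuous.comp_continuousOn
        (continuousOn_const.sub (continuous_ofReal.comp_continuousOn hW)),
      fun _ _ z _ => (norm_truncLoewnerField_le hr _).trans (Real.le_coe_toNNReal _),
      by simp [hT]⟩
  exact hPL.exists_eq_forall_mem_Icc_hasDerivWithinAt₀

theorem norm_sub_le_of_truncLoewner {r T δ : ℝ} (hr : 0 < r) {W₁ W₂ : ℝ → ℝ} {g₁ g₂ : ℝ → ℂ}
    (hg₁ : ∀ t ∈ Icc 0 T, HasDerivWithinAt g₁ (truncLoewnerField r (g₁ t - W₁ t)) (Icc 0 T) t)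
    (hg₂ : ∀ t ∈ Icc 0 T, HasDerivWithinAt g₂ (truncLoewnerField r (g₂ t - W₂ t)) (Icc 0 T) t)
    (hW : ∀ t ∈ Icc 0 T, |W₁ t - W₂ t| ≤ δ) (h0 : g₁ 0 = g₂ 0) :
    ∀ t ∈ Icc 0 T, ‖g₁ t - g₂ t‖ ≤ δ * Real.exp (6 / r ^ 2 * T) := by
  set K := 6 / r ^ 2
  have hK : 0 < K := by positivity
  have hright {g g' : ℝ → ℂ} (hg : ∀ t ∈ Icc 0 T, HasDerivWithinAt g (g' t) (Icc 0 T) t)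
      (t : ℝ) (ht : t ∈ Ico 0 T) : HasDerivWithinAt g (g' t) (Ici t) t :=
    (hg t (Ico_subset_Icc_self ht)).mono_of_mem_nhdsWithin (Icc_mem_nhdsGE_of_mem ht)
  have hcont {g g' : ℝ → ℂ} (hg : ∀ t ∈ Icc 0 T, HasDerivWithinAt g (g' t) (Icc 0 T) t) :
      ContinuousOn g (Icc 0 T) := fun t ht => (hg t ht).continuousWithinAt
  have hdrift : ∀ t ∈ Ico 0 T, dist (truncLoewnerField r (g₁ t - W₁ t))
      (truncLoewnerField r (g₁ t - W₂ t)) ≤ K * δ := fun t ht => by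
    refine ((lipschitzWith_truncLoewnerField hr).dist_le_mul _ _).trans ?_
    rw [Real.coe_toNNReal _ hK.le, dist_sub_left, Complex.dist_eq, ← ofReal_sub, norm_real,
      Real.norm_eq_abs]
    exact mul_le_mul_of_nonneg_left (hW t (Ico_subset_Icc_self ht)) hK.le
  have hexact : ∀ t ∈ Ico 0 T, dist (truncLoewnerField r (g₂ t - W₂ t))
      (truncLoewnerField r (g₂ t - W₂ t)) ≤ 0 := fun _ _ => (dist_self _).le
  intro t ht
  have := dist_le_of_approx_trajectories_ODE (lipschitzWith_truncLoewnerField_sub hr <| W₂ ·)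
    (hcont hg₁) (hright hg₁) hdrift (hcont hg₂) (hright hg₂) hexact (dist_le_zero.2 h0) t ht
  rw [dist_eq_norm, add_zero, sub_zero, Real.coe_toNNReal _ hK.le,
    gronwallBound_of_K_ne_0 hK.ne'] at this
  simp only [zero_mul, zero_add, mul_div_cancel_left₀ _ hK.ne'] at this
  have hδ : 0 ≤ δ := (abs_nonneg _).trans (hW t ht)
  calc ‖g₁ t - g₂ t‖ ≤ δ * (Real.exp (K * t) - 1) := this
    _ ≤ δ * Real.exp (K * T) := by
      gcongr
      linarith [Real.exp_le_exp.2 (mul_le_mul_of_nonneg_left ht.2 hK.le)]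

theorem loewner_continuous_dependence_on_driver_general (T : ℝ) (hT : 0 < T)
    (W : ℝ → ℝ)
    (g : ℝ → ℂ)
    (hg : ∀ t ∈ Set.Icc (0 : ℝ) T,
      HasDerivWithinAt g (2 / (g t - (W t : ℂ))) (Set.Icc (0 : ℝ) T) t)
    (ε : ℝ)
    (hε : ε = sInf ((fun t => ‖g t - (W t : ℂ)‖) '' Set.Icc (0 : ℝ) T))
    (hεpos : 0 < ε) :
    ∃ δ > (0 : ℝ), ∀ Wt : ℝ → ℝ, ContinuousOn Wt (Set.Icc (0 : ℝ) T) →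
      (∀ t ∈ Set.Icc (0 : ℝ) T, |Wt t - W t| ≤ δ) →
      ∃ gt : ℝ → ℂ, gt 0 = g 0 ∧
        (∀ t ∈ Set.Icc (0 : ℝ) T,
          HasDerivWithinAt gt (2 / (gt t - (Wt t : ℂ))) (Set.Icc (0 : ℝ) T) t) ∧
        (∀ t ∈ Set.Icc (0 : ℝ) T,
          ε / 2 ≤ ‖gt t - (Wt t : ℂ)‖ ∧
            ‖gt t - g t‖ ≤ ε / 2) := by
  have hgW : ∀ t ∈ Icc 0 T, ε ≤ ‖g t - W t‖ := fun t ht =>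
    hε ▸ csInf_le ⟨0, by rintro _ ⟨s, -, rfl⟩; positivity⟩ (mem_image_of_mem _ ht)
  have hr : 0 < ε / 2 := by positivity
  have hg_trunc : ∀ t ∈ Icc 0 T,
      HasDerivWithinAt g (truncLoewnerField (ε / 2) (g t - W t)) (Icc 0 T) t := fun t ht => by
    rw [truncLoewnerField_eq_two_div (by linarith [hgW t ht])]
    exact hg t ht
  refine ⟨ε / 4 / Real.exp (6 / (ε / 2) ^ 2 * T), by positivity, fun Wt hWt hδ => ?_⟩
  obtain ⟨gt, hgt0, hgt⟩ := exists_truncLoewner_solution hr hT.le hWt (g 0)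
  have hnear : ∀ t ∈ Icc 0 T, ‖gt t - g t‖ ≤ ε / 4 := fun t ht =>
    (norm_sub_le_of_truncLoewner hr hgt hg_trunc hδ hgt0 t ht).trans_eq
      (div_mul_cancel₀ _ (Real.exp_pos _).ne')
  have hδ' : ∀ t ∈ Icc 0 T, |Wt t - W t| ≤ ε / 4 := fun t ht =>
    (hδ t ht).trans (div_le_self (by positivity) (Real.one_le_exp (by positivity)))
  have hfar : ∀ t ∈ Icc 0 T, ε / 2 ≤ ‖gt t - Wt t‖ := fun t ht => by
    have := calc ε ≤ ‖g t - W t‖ := hgW t ht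
      _ = ‖(gt t - Wt t) - (gt t - g t) + ((Wt t - W t : ℝ) : ℂ)‖ := by congr 1; push_cast; ring
      _ ≤ ‖gt t - Wt t‖ + ‖gt t - g t‖ + |Wt t - W t| := by
        grw [norm_add_le, norm_sub_le, norm_real, Real.norm_eq_abs]
    linarith [hnear t ht, hδ' t ht]
  refine ⟨gt, hgt0, fun t ht => ?_, fun t ht => ⟨hfar t ht, by linarith [hnear t ht]⟩⟩
  simpa only [truncLoewnerField_eq_two_div (hfar t ht)] using hgt t ht

/-- continuous dependence of Loewner's equation on the driver: if `g` solves
Loewner's chordal equation on `[0,T]` driven by a continuous `W` and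
`ε := inf{|g(t) - W(t)| : t ∈ [0,T]} > 0`, then there is `δ > 0` such that any continuous
driver `W̃` with `sup_{[0,T]} |W̃ - W| ≤ δ` admits a solution `g̃` of Loewner's equation with
`g̃(0) = g(0)`, `|g̃(t) - W̃(t)| ≥ ε/2` and `|g̃(t) - g(t)| ≤ ε/2` for all `t ∈ [0,T]`. -/
theorem loewner_continuous_dependence_on_driver (T : ℝ) (hT : 0 < T)
    (W : ℝ → ℝ) (hW : ContinuousOn W (Set.Icc (0 : ℝ) T))
    (g : ℝ → ℂ)
    (hg : ∀ t ∈ Set.Icc (0 : ℝ) T,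
      HasDerivWithinAt g (2 / (g t - (W t : ℂ))) (Set.Icc (0 : ℝ) T) t)
    (ε : ℝ)
    (hε : ε = sInf ((fun t => ‖g t - (W t : ℂ)‖) '' Set.Icc (0 : ℝ) T))
    (hεpos : 0 < ε) :
    ∃ δ > (0 : ℝ), ∀ Wt : ℝ → ℝ, ContinuousOn Wt (Set.Icc (0 : ℝ) T) →
      (∀ t ∈ Set.Icc (0 : ℝ) T, |Wt t - W t| ≤ δ) →
      ∃ gt : ℝ → ℂ, gt 0 = g 0 ∧
        (∀ t ∈ Set.Icc (0 : ℝ) T,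
          HasDerivWithinAt gt (2 / (gt t - (Wt t : ℂ))) (Set.Icc (0 : ℝ) T) t) ∧
        (∀ t ∈ Set.Icc (0 : ℝ) T,
          ε / 2 ≤ ‖gt t - (Wt t : ℂ)‖ ∧
            ‖gt t - g t‖ ≤ ε / 2) :=
  loewner_continuous_dependence_on_driver_general T hT W g hg ε hε hεpos
end
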